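/- Let |𝒯| < |𝒴| and |𝒳| ≥ 2, and suppose min_{Q∈Δ_P} I_Q(T:X|Y) = 0. If there exists a maximizer of H_Q(T|X,Y) over Δ_P with full support, then the maximizer is not unique. -/

import Mathlib

open scoped BigOperators
noncomputable section

variable {T X Y : Type*}

/-- A joint probability distribution of `(T,X,Y)`, as a function `T → X → Y → ℝ`. -/
def IsDist [Fintype T] [Fintype X] [Fintype Y] (P : T → X → Y → ℝ) : Prop :=
  (∀ t x y, 0 ≤ P t x y) ∧ ∑ t, ∑ x, ∑ y, P t x y = 1

/-- The `(T,X)`-marginal. -/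
def margTX [Fintype Y] (P : T → X → Y → ℝ) (t : T) (x : X) : ℝ := ∑ y, P t x y

/-- The `(T,Y)`-marginal. -/
def margTY [Fintype X] (P : T → X → Y → ℝ) (t : T) (y : Y) : ℝ := ∑ x, P t x y

/-- The `(X,Y)`-marginal. -/
def margXY [Fintype T] (P : T → X → Y → ℝ) (x : X) (y : Y) : ℝ := ∑ t, P t x y

/-- The `T`-marginal. -/
def margT [Fintype X] [Fintype Y] (P : T → X → Y → ℝ) (t : T) : ℝ := ∑ x, ∑ y, P t x y

/-- The `Y`-marginal. -/
def margY [Fintype T] [Fintype X] (P : T → X → Y → ℝ) (y : Y) : ℝ := ∑ t, ∑ x, P t x y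

/-- `Δ_P`: the polytope of joint distributions with the same `(T,X)`- and
`(T,Y)`-marginals as `P`. -/
def deltaP [Fintype T] [Fintype X] [Fintype Y] (P : T → X → Y → ℝ) :
    Set (T → X → Y → ℝ) :=
  {Q | IsDist Q ∧ (∀ t x, margTX Q t x = margTX P t x) ∧
    (∀ t y, margTY Q t y = margTY P t y)}

/-- The conditional entropy `H_Q(T|X,Y)` (with the convention `0 log 0 = 0`,
automatic since `Real.log 0 = 0`). -/
def condEntTXY [Fintype T] [Fintype X] [Fintype Y] (Q : T → X → Y → ℝ) : ℝ :=
  ∑ t, ∑ x, ∑ y, -(Q t x y * Real.log (Q t x y / margXY Q x y))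

/-- The conditional mutual information `I_Q(T:X|Y)`. -/
def CMI [Fintype T] [Fintype X] [Fintype Y] (Q : T → X → Y → ℝ) : ℝ :=
  ∑ t, ∑ x, ∑ y,
    Q t x y * Real.log (Q t x y * margY Q y / (margTY Q t y * margXY Q x y))

/-! By the chain rule `H_Q(T|X,Y) + I_Q(T:X|Y) = H_Q(T|Y)`, and the right-hand side depends
only on the `(T,Y)`-marginal, so it is constant on `Δ_P`: the maximizers of `H_Q(T|X,Y)` are the
minimizers of `I_Q(T:X|Y)`, i.e. the `Q ∈ Δ_P` with `I_Q(T:X|Y) = 0`. A full-support maximizer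
therefore factors as `Q*(t|y) Q*(x,y)`. Replace the second factor by `Q*(x,y) + ε d(y) e(x)`,
where `∑ₓ e(x) = 0` (possible as `|𝒳| ≥ 2`) and `∑_y Q*(t|y) d(y) = 0` for every `t` (possible
as `|𝒯| < |𝒴|`): this preserves both marginals and the factorization, hence `I = 0`, and for
small `ε > 0` also nonnegativity. -/

open Finset Filter Topology

theorem Real.eq_of_sum_mul_log_div_eq_zero {ι : Type*} [Fintype ι] {q r : ι → ℝ}
    (hq : ∀ i, 0 < q i) (hr : ∀ i, 0 < r i) (hsum : ∑ i, r i = ∑ i, q i)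
    (h : ∑ i, q i * Real.log (q i / r i) = 0) : q = r := by
  by_contra hne
  obtain ⟨i, hi⟩ := Function.ne_iff.1 hne
  -- `log x ≤ x - 1`, strictly unless `x = 1`, applied to `x = r / q`
  have key : ∀ j, -(q j * Real.log (q j / r j)) = q j * Real.log (r j / q j) := fun j => by
    rw [← inv_div, Real.log_inv, mul_neg, neg_neg]
  have hlt : ∑ j, q j * Real.log (r j / q j) < ∑ j, (r j - q j) := by
    refine Finset.sum_lt_sum (fun j _ => ?_) ⟨i, mem_univ i, ?_⟩
    · calc q j * Real.log (r j / q j) ≤ q j * (r j / q j - 1) :=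
            mul_le_mul_of_nonneg_left (Real.log_le_sub_one_of_pos (div_pos (hr j) (hq j)))
              (hq j).le
        _ = r j - q j := by field_simp [(hq j).ne']
    · calc q i * Real.log (r i / q i) < q i * (r i / q i - 1) :=
            mul_lt_mul_of_pos_left (Real.log_lt_sub_one_of_pos (div_pos (hr i) (hq i))
              (by rw [Ne, div_eq_one_iff_eq (hq i).ne']; exact fun h' => hi h'.symm)) (hq i)
        _ = r i - q i := by field_simp [(hq i).ne']
  simp only [← key, sum_neg_distrib, h, sum_sub_distrib, hsum, sub_self, neg_zero,
    lt_irrefl] at hlt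

theorem exists_ne_zero_forall_sum_mul_eq_zero {K m n : Type*} [Field K] [Fintype m]
    [Fintype n] (hcard : Fintype.card m < Fintype.card n) (w : m → n → K) :
    ∃ d : n → K, d ≠ 0 ∧ ∀ i, ∑ j, w i j * d j = 0 := by
  have hker : LinearMap.ker (Matrix.mulVecLin w) ≠ ⊥ :=
    LinearMap.ker_ne_bot_of_finrank_lt (by simpa using hcard)
  obtain ⟨d, hd, hne⟩ := Submodule.exists_mem_ne_zero_of_ne_bot hker
  exact ⟨d, hne, fun i => congrFun hd i⟩

theorem exists_pos_forall_pos_add_mul {ι : Type*} [Finite ι] {b : ι → ℝ}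
    (hb : ∀ i, 0 < b i) (c : ι → ℝ) : ∃ ε > 0, ∀ i, 0 < b i + ε * c i := by
  have hpos : ∀ i, ∀ᶠ ε in 𝓝 (0 : ℝ), 0 < b i + ε * c i := fun i => by
    have hcont : Continuous fun ε : ℝ => b i + ε * c i := by fun_prop
    simpa using hcont.tendsto 0 |>.eventually (lt_mem_nhds (by simpa using hb i))
  obtain ⟨ε, hε, h⟩ := ((eventually_mem_nhdsWithin (a := (0 : ℝ)) (s := Set.Ioi 0)).and
    (nhdsWithin_le_nhds (eventually_all.2 hpos))).exists
  exact ⟨ε, hε, h⟩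

theorem le_margTY [Fintype X] {Q : T → X → Y → ℝ} (hQ : ∀ t x y, 0 ≤ Q t x y)
    (t : T) (x : X) (y : Y) : Q t x y ≤ margTY Q t y :=
  single_le_sum (fun x _ => hQ t x y) (mem_univ x)

theorem le_margXY [Fintype T] {Q : T → X → Y → ℝ} (hQ : ∀ t x y, 0 ≤ Q t x y)
    (t : T) (x : X) (y : Y) : Q t x y ≤ margXY Q x y :=
  single_le_sum (fun t _ => hQ t x y) (mem_univ t)

theorem margY_eq_sum_margTY [Fintype T] [Fintype X] (Q : T → X → Y → ℝ) (y : Y) :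
    margY Q y = ∑ t, margTY Q t y :=
  rfl

theorem margY_eq_sum_margXY [Fintype T] [Fintype X] (Q : T → X → Y → ℝ) (y : Y) :
    margY Q y = ∑ x, margXY Q x y :=
  sum_comm

theorem margTY_le_margY [Fintype T] [Fintype X] {Q : T → X → Y → ℝ}
    (hQ : ∀ t x y, 0 ≤ Q t x y) (t : T) (y : Y) : margTY Q t y ≤ margY Q y :=
  single_le_sum (fun t _ => sum_nonneg fun x _ => hQ t x y) (mem_univ t)

section Marginals

variable [Fintype T] [Fintype X] [Fintype Y] {Q : T → X → Y → ℝ}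

/-- `H_Q(T|Y)`. -/
def condEntTY (Q : T → X → Y → ℝ) : ℝ :=
  ∑ t, ∑ y, -(margTY Q t y * Real.log (margTY Q t y / margY Q y))

theorem condEntTY_congr {Q' : T → X → Y → ℝ} (h : margTY Q = margTY Q') :
    condEntTY Q = condEntTY Q' := by
  simp only [condEntTY, margY_eq_sum_margTY, h]

theorem condEntTXY_add_CMI (hQ : ∀ t x y, 0 ≤ Q t x y) :
    condEntTXY Q + CMI Q = condEntTY Q := by
  have hterm : ∀ t x y, -(Q t x y * Real.log (Q t x y / margXY Q x y)) +
      Q t x y * Real.log (Q t x y * margY Q y / (margTY Q t y * margXY Q x y)) =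
      -(Q t x y * Real.log (margTY Q t y / margY Q y)) := by
    intro t x y
    rcases (hQ t x y).eq_or_lt with hq | hq
    · simp [← hq]
    have ha := hq.trans_le (le_margTY hQ t x y)
    have hb := hq.trans_le (le_margXY hQ t x y)
    have hm := ha.trans_le (margTY_le_margY hQ t y)
    rw [Real.log_div hq.ne' hb.ne', Real.log_div (mul_pos hq hm).ne' (mul_pos ha hb).ne',
      Real.log_mul hq.ne' hm.ne', Real.log_mul ha.ne' hb.ne', Real.log_div ha.ne' hm.ne']
    ring
  simp only [condEntTXY, CMI, condEntTY, ← sum_add_distrib, hterm]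
  refine sum_congr rfl fun t _ => ?_
  rw [sum_comm]
  simp only [margTY, sum_mul, sum_neg_distrib]

theorem CMI_eq_zero_of_mul_margY_eq
    (h : ∀ t x y, Q t x y * margY Q y = margTY Q t y * margXY Q x y) : CMI Q = 0 := by
  refine sum_eq_zero fun t _ => sum_eq_zero fun x _ => sum_eq_zero fun y _ => ?_
  rw [h]
  rcases eq_or_ne (margTY Q t y * margXY Q x y) 0 with h0 | h0
  · simp [h0]
  · simp [div_self h0]

theorem CMI_mul_eq_zero (κ : T → Y → ℝ) (R : X → Y → ℝ) :
    CMI (fun t x y => κ t y * R x y) = 0 :=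
  CMI_eq_zero_of_mul_margY_eq fun t x y => by
    simp only [margY, margTY, margXY, ← mul_sum, ← sum_mul]
    ring

theorem mul_margY_eq_of_CMI_eq_zero (hQ : ∀ t x y, 0 < Q t x y) (h : CMI Q = 0) (t : T)
    (x : X) (y : Y) : Q t x y * margY Q y = margTY Q t y * margXY Q x y := by
  have hQ₀ : ∀ t x y, 0 ≤ Q t x y := fun t x y => (hQ t x y).le
  have ha : ∀ t x y, 0 < margTY Q t y := fun t x y => (hQ t x y).trans_le (le_margTY hQ₀ t x y)
  have hb : ∀ t x y, 0 < margXY Q x y := fun t x y => (hQ t x y).trans_le (le_margXY hQ₀ t x y)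
  have hm : ∀ t x y, 0 < margY Q y := fun t x y =>
    (ha t x y).trans_le (margTY_le_margY hQ₀ t y)
  -- `CMI Q` is the Kullback-Leibler divergence of `Q` from `r`, which vanishes only at `Q = r`
  let r : T × X × Y → ℝ := fun p => margTY Q p.1 p.2.2 * margXY Q p.2.1 p.2.2 / margY Q p.2.2
  have hr : ∀ p, 0 < r p := fun ⟨t, x, y⟩ =>
    div_pos (mul_pos (ha t x y) (hb t x y)) (hm t x y)
  have hsum : ∑ p, r p = ∑ p : T × X × Y, Q p.1 p.2.1 p.2.2 := by
    have hswap : ∀ f : T → X → Y → ℝ, ∑ t, ∑ x, ∑ y, f t x y = ∑ y, ∑ t, ∑ x, f t x y :=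
      fun f => (sum_congr rfl fun t _ => sum_comm).trans sum_comm
    calc ∑ p, r p = ∑ y, (∑ t, margTY Q t y) * (∑ x, margXY Q x y) / margY Q y := by
          simp only [r, Fintype.sum_prod_type, hswap, sum_mul_sum, sum_div]
      _ = ∑ y, margY Q y := by
          simp only [← margY_eq_sum_margTY, ← margY_eq_sum_margXY, mul_self_div_self]
      _ = ∑ p : T × X × Y, Q p.1 p.2.1 p.2.2 := by
          simp only [Fintype.sum_prod_type, hswap]
          rfl
  have hlog : ∑ p : T × X × Y, Q p.1 p.2.1 p.2.2 * Real.log (Q p.1 p.2.1 p.2.2 / r p) = 0 := by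
    simp only [r, div_div_eq_mul_div, Fintype.sum_prod_type]
    exact h
  have := congrFun (Real.eq_of_sum_mul_log_div_eq_zero (fun p => hQ _ _ _) hr hsum hlog) (t, x, y)
  rw [this, div_mul_cancel₀ _ (hm t x y).ne']

end Marginals

section Polytope

variable [Fintype T] [Fintype X] [Fintype Y] {P Q : T → X → Y → ℝ}

theorem condEntTXY_add_CMI_of_mem_deltaP (hQ : Q ∈ deltaP P) :
    condEntTXY Q + CMI Q = condEntTY P :=
  (condEntTXY_add_CMI hQ.1.1).trans (condEntTY_congr (funext₂ hQ.2.2))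

theorem mul_add_mem_deltaP {κ : T → Y → ℝ} {R c : X → Y → ℝ}
    (hQ : (fun t x y => κ t y * R x y) ∈ deltaP P) (hκ : ∀ t y, 0 ≤ κ t y)
    (hRc : ∀ x y, 0 ≤ R x y + c x y) (hcX : ∀ y, ∑ x, c x y = 0)
    (hcY : ∀ t x, ∑ y, κ t y * c x y = 0) :
    (fun t x y => κ t y * (R x y + c x y)) ∈ deltaP P := by
  obtain ⟨⟨-, hsum⟩, hTX, hTY⟩ := hQ
  have hTX' : ∀ t x, margTX (fun t x y => κ t y * (R x y + c x y)) t x = margTX P t x :=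
    fun t x => by
      rw [← hTX t x]
      simp only [margTX, mul_add, sum_add_distrib, hcY, add_zero]
  refine ⟨⟨fun t x y => mul_nonneg (hκ t y) (hRc x y), ?_⟩, hTX', fun t y => ?_⟩
  · rw [← hsum]
    exact sum_congr rfl fun t _ => sum_congr rfl fun x _ => (hTX' t x).trans (hTX t x).symm
  · rw [← hTY t y]
    simp only [margTY, ← mul_sum, sum_add_distrib, hcX, add_zero]

theorem exists_ne_mem_deltaP_CMI_eq_zero (hcard : Fintype.card T < Fintype.card Y)
    (hX : 2 ≤ Fintype.card X) (hQ : Q ∈ deltaP P) (hpos : ∀ t x y, 0 < Q t x y)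
    (hfact : ∀ t x y, Q t x y * margY Q y = margTY Q t y * margXY Q x y) :
    ∃ Q' ∈ deltaP P, Q' ≠ Q ∧ CMI Q' = 0 := by
  have hQ₀ : ∀ t x y, 0 ≤ Q t x y := fun t x y => (hpos t x y).le
  obtain ⟨t₀⟩ : Nonempty T := by
    by_contra hT
    simpa [not_nonempty_iff.1 hT] using hQ.1.2
  obtain ⟨e, he, hesum⟩ := exists_ne_zero_forall_sum_mul_eq_zero (m := Unit) (n := X)
    (by rw [Fintype.card_unit]; omega) fun _ _ => (1 : ℝ)
  replace hesum : ∑ x, e x = 0 := by simpa using hesum ()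
  obtain ⟨x₀, hx₀⟩ := Function.ne_iff.1 he
  have hm : ∀ y, 0 < margY Q y := fun y =>
    (hpos t₀ x₀ y).trans_le ((le_margTY hQ₀ t₀ x₀ y).trans (margTY_le_margY hQ₀ t₀ y))
  set κ : T → Y → ℝ := fun t y => margTY Q t y / margY Q y
  have hκ : ∀ t y, 0 < κ t y := fun t y =>
    div_pos ((hpos t x₀ y).trans_le (le_margTY hQ₀ t x₀ y)) (hm y)
  have hQκ : ∀ t x y, Q t x y = κ t y * margXY Q x y := fun t x y => by
    rw [div_mul_eq_mul_div, eq_div_iff (hm y).ne', hfact]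
  obtain ⟨d, hd, hdκ⟩ := exists_ne_zero_forall_sum_mul_eq_zero hcard κ
  obtain ⟨y₀, hy₀⟩ := Function.ne_iff.1 hd
  obtain ⟨ε, hε, hRc⟩ := exists_pos_forall_pos_add_mul
    (fun p : X × Y => (hpos t₀ p.1 p.2).trans_le (le_margXY hQ₀ t₀ p.1 p.2))
    fun p => d p.2 * e p.1
  refine ⟨fun t x y => κ t y * (margXY Q x y + ε * (d y * e x)), ?_, fun h => ?_,
    CMI_mul_eq_zero _ _⟩
  · refine mul_add_mem_deltaP ?_ (fun t y => (hκ t y).le) (fun x y => (hRc (x, y)).le)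
      (fun y => ?_) (fun t x => ?_)
    · convert hQ using 1
      exact funext₃ fun t x y => (hQκ t x y).symm
    · simp only [← mul_sum, hesum, mul_zero]
    · calc ∑ y, κ t y * (ε * (d y * e x)) = ε * e x * ∑ y, κ t y * d y := by
            rw [mul_sum]
            exact sum_congr rfl fun y _ => by ring
        _ = 0 := by rw [hdκ t, mul_zero]
  · have := congrFun₃ h t₀ x₀ y₀
    rw [hQκ, mul_add, add_eq_left] at this
    exact mul_ne_zero (hκ t₀ y₀).ne' (mul_ne_zero hε.ne' (mul_ne_zero hy₀ hx₀)) this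

end Polytope

theorem nonuniqueness_cardinalities_CI_general [Fintype T] [Fintype X] [Fintype Y]
    (hcard : Fintype.card T < Fintype.card Y) (hX : 2 ≤ Fintype.card X)
    (P Qs : T → X → Y → ℝ)
    (hUI : IsLeast {v : ℝ | ∃ Q ∈ deltaP P, CMI Q = v} 0)
    (hQs : Qs ∈ deltaP P) (hmax : ∀ Q ∈ deltaP P, condEntTXY Q ≤ condEntTXY Qs)
    (hfull : ∀ t x y, 0 < Qs t x y) :
    ∃ Q' ∈ deltaP P, Q' ≠ Qs ∧ ∀ Q ∈ deltaP P, condEntTXY Q ≤ condEntTXY Q' := by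
  obtain ⟨⟨Q₀, hQ₀, hCMI₀⟩, hCMI_nonneg⟩ := hUI
  have hCMI_nonneg' : ∀ Q ∈ deltaP P, 0 ≤ CMI Q := fun Q hQ => hCMI_nonneg ⟨Q, hQ, rfl⟩
  have hCMIs : CMI Qs = 0 := by
    have := condEntTXY_add_CMI_of_mem_deltaP hQ₀
    have := condEntTXY_add_CMI_of_mem_deltaP hQs
    linarith [hmax Q₀ hQ₀, hCMI_nonneg' Qs hQs]
  obtain ⟨Q', hQ', hne, hCMI'⟩ := exists_ne_mem_deltaP_CMI_eq_zero hcard hX hQs hfull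
    (mul_margY_eq_of_CMI_eq_zero hfull hCMIs)
  refine ⟨Q', hQ', hne, fun Q hQ => ?_⟩
  have := condEntTXY_add_CMI_of_mem_deltaP hQ
  have := condEntTXY_add_CMI_of_mem_deltaP hQ'
  linarith [hCMI_nonneg' Q hQ]

/-- Let `|𝒯| < |𝒴|` and `|𝒳| ≥ 2`, and suppose `min_{Q ∈ Δ_P} I_Q(T:X|Y) = 0`.
If there is a maximizer of `H_Q(T|X,Y)` over `Δ_P` with full support, then the
maximizer is not unique. -/
theorem nonuniqueness_cardinalities_CI [Fintype T] [Fintype X] [Fintype Y]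
    (hcard : Fintype.card T < Fintype.card Y) (hX : 2 ≤ Fintype.card X)
    (P Qs : T → X → Y → ℝ) (hP : IsDist P)
    (hUI : IsLeast {v : ℝ | ∃ Q ∈ deltaP P, CMI Q = v} 0)
    (hQs : Qs ∈ deltaP P) (hmax : ∀ Q ∈ deltaP P, condEntTXY Q ≤ condEntTXY Qs)
    (hfull : ∀ t x y, 0 < Qs t x y) :
    ∃ Q' ∈ deltaP P, Q' ≠ Qs ∧ ∀ Q ∈ deltaP P, condEntTXY Q ≤ condEntTXY Q' :=
  nonuniqueness_cardinalities_CI_general hcard hX P Qs hUI hQs hmax hfull
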